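/- Let (X,d) be a metric space with intrinsic metric. Then for all nonempty bounded subsets M, W of X and all real numbers r > 0, R > 0 one has hausdorffDist(cthickening r M, cthickening R W) ≤ hausdorffDist(M,W) + |R − r|. -/

import Mathlib

/-!
Walking from `x` towards a near-closest point `w ∈ S` along an `ε`-chain of almost minimal
length, one reaches `cthickening r S` after having covered at most `infDist x S - r + O(ε)`:
stop at the first chain point from which the remaining length to `w` is at most `r`. Hence
`infDist x (cthickening r S) ≤ max (infDist x S - r) 0`. Combined with
`infDist x W ≤ infDist x M + hausdorffDist M W ≤ r + hausdorffDist M W` for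
`x ∈ cthickening r M`, this bounds each half of the Hausdorff distance.
-/

open Metric Bornology Finset

def IntrinsicMetric (X : Type*) [PseudoMetricSpace X] : Prop :=
  ∀ x y : X, ∀ ε > (0 : ℝ), ∃ (k : ℕ) (z : ℕ → X), z 0 = x ∧ z k = y ∧
    (∀ i < k, dist (z i) (z (i + 1)) < ε) ∧
    (∑ i ∈ range k, dist (z i) (z (i + 1))) < dist x y + ε

lemma exists_sum_Ico_le_and_sum_range_lt {a : ℕ → ℝ} {k : ℕ} {ε r : ℝ} (hε : 0 < ε)
    (ha : ∀ i < k, a i < ε) (hr : 0 ≤ r) (hrk : r ≤ ∑ i ∈ range k, a i) :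
    ∃ i ≤ k, ∑ j ∈ Ico i k, a j ≤ r ∧ ∑ j ∈ range i, a j < ∑ j ∈ range k, a j - r + ε := by
  classical
  obtain ⟨i, htail, hmin⟩ : ∃ i, ∑ j ∈ Ico i k, a j ≤ r ∧ ∀ j < i, r < ∑ l ∈ Ico j k, a l :=
    have h : ∃ i, ∑ j ∈ Ico i k, a j ≤ r := ⟨k, by simpa using hr⟩
    ⟨Nat.find h, Nat.find_spec h, fun j hj ↦ lt_of_not_ge (Nat.find_min h hj)⟩
  have hik : i ≤ k := by
    by_contra! hki
    exact (hmin k hki).not_ge (by simpa using hr)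
  refine ⟨i, hik, htail, ?_⟩
  suffices r < ∑ j ∈ Ico i k, a j + ε by
    rw [← sum_range_add_sum_Ico a hik]
    linarith
  rcases i with _ | i
  · rw [Nat.Ico_zero_eq_range]
    linarith
  · have hprev := hmin i (lt_add_one i)
    rw [sum_eq_sum_Ico_succ_bot (by omega)] at hprev
    linarith [ha i (by omega)]

lemma mem_cthickening_iff_infDist_le {X : Type*} [PseudoMetricSpace X] {S : Set X}
    (hS : S.Nonempty) {r : ℝ} (hr : 0 ≤ r) {x : X} :
    x ∈ cthickening r S ↔ infDist x S ≤ r := by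
  rw [mem_cthickening_iff, ENNReal.le_ofReal_iff_toReal_le (infEDist_ne_top hS) hr, infDist]

section IntrinsicMetric

variable {X : Type*} [PseudoMetricSpace X]

lemma IntrinsicMetric.infDist_cthickening_le_sub (hX : IntrinsicMetric X) {S : Set X}
    (hS : S.Nonempty) {r : ℝ} (hr : 0 ≤ r) {x : X} (hxS : r ≤ infDist x S) :
    infDist x (cthickening r S) ≤ infDist x S - r := by
  refine le_of_forall_pos_le_add fun δ hδ ↦ ?_
  have hδ3 : 0 < δ / 3 := by positivity
  obtain ⟨w, hwS, hxw⟩ := (infDist_lt_iff hS).1 (lt_add_of_pos_right (infDist x S) hδ3)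
  obtain ⟨k, z, rfl, rfl, hstep, hlen⟩ := hX x w (δ / 3) hδ3
  have hrk : r ≤ ∑ i ∈ range k, dist (z i) (z (i + 1)) :=
    hxS.trans ((infDist_le_dist_of_mem hwS).trans (dist_le_range_sum_dist z k))
  obtain ⟨i, hik, htail, hhead⟩ :=
    exists_sum_Ico_le_and_sum_range_lt hδ3 hstep hr hrk
  have hzi : z i ∈ cthickening r S :=
    mem_cthickening_of_dist_le _ _ _ _ hwS ((dist_le_Ico_sum_dist z hik).trans htail)
  calc infDist (z 0) (cthickening r S) ≤ dist (z 0) (z i) := infDist_le_dist_of_mem hzi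
    _ ≤ ∑ j ∈ range i, dist (z j) (z (j + 1)) := dist_le_range_sum_dist z i
    _ ≤ infDist (z 0) S - r + δ := by linarith

lemma IntrinsicMetric.infDist_cthickening_le_max (hX : IntrinsicMetric X) {S : Set X}
    (hS : S.Nonempty) {r : ℝ} (hr : 0 ≤ r) (x : X) :
    infDist x (cthickening r S) ≤ max (infDist x S - r) 0 := by
  rcases le_total (infDist x S) r with hxS | hxS
  · rw [infDist_zero_of_mem ((mem_cthickening_iff_infDist_le hS hr).2 hxS)]
    exact le_max_right _ _
  · exact (hX.infDist_cthickening_le_sub hS hr hxS).trans (le_max_left _ _)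

lemma IntrinsicMetric.infDist_cthickening_le_hausdorffDist_add (hX : IntrinsicMetric X)
    {M W : Set X} (hM : M.Nonempty) (hW : W.Nonempty) (hMW : hausdorffEDist M W ≠ ⊤)
    {r R : ℝ} (hr : 0 ≤ r) (hR : 0 ≤ R) {x : X} (hx : x ∈ cthickening r M) :
    infDist x (cthickening R W) ≤ hausdorffDist M W + |R - r| := by
  have hxM : infDist x M ≤ r := (mem_cthickening_iff_infDist_le hM hr).1 hx
  have hxW : infDist x W ≤ infDist x M + hausdorffDist M W :=
    infDist_le_infDist_add_hausdorffDist hMW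
  refine (hX.infDist_cthickening_le_max hW hR x).trans (max_le ?_ ?_)
  · linarith [neg_abs_le (R - r)]
  · exact add_nonneg hausdorffDist_nonneg (abs_nonneg _)

end IntrinsicMetric

/-- In a space with intrinsic metric, the Hausdorff distance between generalized closed
balls (closed thickenings) is bounded by `hausdorffDist M W + |R - r|`. -/
theorem hausdorffDist_cthickening_le {X : Type*} [MetricSpace X]
    (hintr : ∀ x y : X, ∀ ε > (0 : ℝ), ∃ (k : ℕ) (z : ℕ → X), z 0 = x ∧ z k = y ∧
      (∀ i < k, dist (z i) (z (i + 1)) < ε) ∧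
      (∑ i ∈ Finset.range k, dist (z i) (z (i + 1))) < dist x y + ε)
    (M W : Set X) (hM : M.Nonempty) (hMb : IsBounded M)
    (hW : W.Nonempty) (hWb : IsBounded W)
    (r R : ℝ) (hr : 0 < r) (hR : 0 < R) :
    hausdorffDist (cthickening r M) (cthickening R W) ≤ hausdorffDist M W + |R - r| := by
  have hX : IntrinsicMetric X := hintr
  have hMW : hausdorffEDist M W ≠ ⊤ := hausdorffEDist_ne_top_of_nonempty_of_bounded hM hW hMb hWb
  have hWM : hausdorffEDist W M ≠ ⊤ := by rwa [hausdorffEDist_comm]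
  refine hausdorffDist_le_of_infDist (add_nonneg hausdorffDist_nonneg (abs_nonneg _))
    (fun x hx ↦ hX.infDist_cthickening_le_hausdorffDist_add hM hW hMW hr.le hR.le hx)
    (fun y hy ↦ ?_)
  rw [hausdorffDist_comm, abs_sub_comm]
  exact hX.infDist_cthickening_le_hausdorffDist_add hW hM hWM hR.le hr.le hy
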